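/- Upper binomial transform pair: for all n ≥ 0, 0 ≤ k ≤ n and rationals a,b,c0,c∞, E(n,k)(a,b;c0,c∞) = Σ_{j=k}^{n} (-1)^{j-k}·C(j,k)·(c0+c∞)^{↑(n−j),b}·S(n,n−j)(−a,b;c∞), and conversely (c0+c∞)^{↑(n−k),b}·S(n,n−k)(−a,b;c∞) = Σ_{j=k}^{n} C(j,k)·E(n,j)(a,b;c0,c∞), where (y)^{↑m,b} = y(y+b)···(y+(m−1)b). -/

import Mathlib

/-- Stirling subset numbers (Stirling numbers of the second kind). -/
def stirling2 : ℕ → ℕ → ℕ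
  | 0, 0 => 1
  | 0, _+1 => 0
  | _+1, 0 => 0
  | n+1, k+1 => (k+1) * stirling2 n (k+1) + stirling2 n k

/-- Generalized Stirling numbers of Hsu and Shiue, S(n,k)(a,b;r). -/
def gS (a b r : ℚ) : ℕ → ℕ → ℚ
  | 0, 0 => 1
  | 0, _+1 => 0
  | n+1, 0 => (-a * n + r) * gS a b r n 0
  | n+1, k+1 => (-a * n + b * (k+1) + r) * gS a b r n (k+1) + gS a b r n k

/-- Generalized Eulerian numbers E(n,k)(a,b;c0,c∞). -/
def gE (a b c0 ci : ℚ) : ℕ → ℕ → ℚ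
  | 0, 0 => 1
  | 0, _+1 => 0
  | n+1, 0 => (-a * n + c0) * gE a b c0 ci n 0
  | n+1, k+1 => (-a * n + b * (k+1) + c0) * gE a b c0 ci n (k+1)
      + ((a+b) * n - b * k + ci) * gE a b c0 ci n k

open Finset

lemma gE_zero (a b c0 ci : ℚ) : ∀ n k, n < k → gE a b c0 ci n k = 0 := by
  intro n
  induction n with
  | zero => intro k hk; match k, hk with | k+1, _ => rfl
  | succ n ih =>
    intro k hk
    match k, hk with
    | k+1, hk =>
      have h1 : n < k + 1 := by omega
      have h2 : n < k := by omega
      simp [gE, ih (k+1) h1, ih k h2]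

lemma gS_zero (a b r : ℚ) : ∀ n k, n < k → gS a b r n k = 0 := by
  intro n
  induction n with
  | zero => intro k hk; match k, hk with | k+1, _ => rfl
  | succ n ih =>
    intro k hk
    match k, hk with
    | k+1, hk =>
      have h1 : n < k + 1 := by omega
      have h2 : n < k := by omega
      simp [gS, ih (k+1) h1, ih k h2]

lemma gS_diag (a b r : ℚ) : ∀ n, gS a b r n n = 1 := by
  intro n
  induction n with
  | zero => rfl
  | succ n ih => simp [gS, ih, gS_zero a b r n (n+1) (by omega)]

lemma coef_id (a b c0 ci : ℚ) (n k m : ℕ) (hk : k ≤ n) (hm : m ≤ n) :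
    (Nat.choose m (k+1) : ℚ) * (-a*n + b*m + c0)
      + (Nat.choose (m+1) (k+1) : ℚ) * ((a+b)*n - b*m + ci)
    = (a*n + b*((n-k : ℕ) : ℚ) + ci) * (Nat.choose m k : ℚ)
      + (c0 + ci + ((n-(k+1) : ℕ) : ℚ)*b) * (Nat.choose m (k+1) : ℚ) := by
  rw [Nat.choose_succ_succ m k]
  push_cast
  rcases le_or_gt m k with hmk | hmk
  · have h1 : Nat.choose m (k+1) = 0 := Nat.choose_eq_zero_of_lt (by omega)
    rcases eq_or_lt_of_le hmk with rfl | hlt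
    · rw [h1, Nat.cast_sub hk]
      push_cast
      ring
    · have h2 : Nat.choose m k = 0 := Nat.choose_eq_zero_of_lt hlt
      rw [h1, h2]
      push_cast
      ring
  · have hc : (Nat.choose m (k+1) : ℚ) * (k+1) = (Nat.choose m k : ℚ) * ((m:ℚ) - k) := by
      have := Nat.choose_succ_right_eq m k
      have h := congrArg (Nat.cast : ℕ → ℚ) this
      push_cast [Nat.cast_sub (le_of_lt hmk)] at h
      exact h
    rw [Nat.cast_sub hk, Nat.cast_sub (by omega : k + 1 ≤ n)]
    push_cast
    linear_combination b * hc

lemma T_rec (a b c0 ci : ℚ) (n k : ℕ) (hk : k ≤ n) :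
    ∑ m ∈ range (n+2), (Nat.choose m (k+1) : ℚ) * gE a b c0 ci (n+1) m
    = (a*n + b*((n-k : ℕ) : ℚ) + ci) * ∑ m ∈ range (n+1), (Nat.choose m k : ℚ) * gE a b c0 ci n m
      + (c0 + ci + ((n-(k+1) : ℕ) : ℚ)*b) *
        ∑ m ∈ range (n+1), (Nat.choose m (k+1) : ℚ) * gE a b c0 ci n m := by
  rw [Finset.sum_range_succ']
  simp only [Nat.choose_zero_succ, Nat.cast_zero, zero_mul, add_zero]
  have expand : ∀ m, (Nat.choose (m+1) (k+1) : ℚ) * gE a b c0 ci (n+1) (m+1)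
      = (Nat.choose (m+1) (k+1) : ℚ) * (-a*n + b*(m+1) + c0) * gE a b c0 ci n (m+1)
        + (Nat.choose (m+1) (k+1) : ℚ) * ((a+b)*n - b*m + ci) * gE a b c0 ci n m := by
    intro m
    show (Nat.choose (m+1) (k+1) : ℚ) * ((-a*↑n + b*(↑m+1) + c0) * gE a b c0 ci n (m+1)
        + ((a+b)*↑n - b*↑m + ci) * gE a b c0 ci n m) = _
    push_cast
    ring
  rw [Finset.sum_congr rfl (fun m _ => expand m), Finset.sum_add_distrib]
  -- reindex the first sum
  have hS1 : ∑ m ∈ range (n+1), (Nat.choose (m+1) (k+1) : ℚ) * (-a*n + b*(m+1) + c0) * gE a b c0 ci n (m+1)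
      = ∑ m ∈ range (n+1), (Nat.choose m (k+1) : ℚ) * (-a*n + b*m + c0) * gE a b c0 ci n m := by
    have h2 : ∑ m ∈ range (n+2), (Nat.choose m (k+1) : ℚ) * (-a*n + b*m + c0) * gE a b c0 ci n m
        = ∑ m ∈ range (n+1), (Nat.choose (m+1) (k+1) : ℚ) * (-a*(n:ℚ) + b*(m+1) + c0) * gE a b c0 ci n (m+1) + 0 := by
      rw [Finset.sum_range_succ']
      push_cast
      simp
    have h3 : ∑ m ∈ range (n+2), (Nat.choose m (k+1) : ℚ) * (-a*n + b*m + c0) * gE a b c0 ci n m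
        = ∑ m ∈ range (n+1), (Nat.choose m (k+1) : ℚ) * (-a*n + b*m + c0) * gE a b c0 ci n m := by
      rw [Finset.sum_range_succ, gE_zero a b c0 ci n (n+1) (by omega)]
      ring
    rw [← h3, h2, add_zero]
  rw [hS1, Finset.mul_sum, Finset.mul_sum, ← Finset.sum_add_distrib, ← Finset.sum_add_distrib]
  refine Finset.sum_congr rfl fun m hm => ?_
  have hm' : m ≤ n := by simpa [Nat.lt_succ_iff] using hm
  have := coef_id a b c0 ci n k m hk hm'
  calc (Nat.choose m (k+1) : ℚ) * (-a*n + b*m + c0) * gE a b c0 ci n m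
        + (Nat.choose (m+1) (k+1) : ℚ) * ((a+b)*n - b*m + ci) * gE a b c0 ci n m
      = ((Nat.choose m (k+1) : ℚ) * (-a*n + b*m + c0)
        + (Nat.choose (m+1) (k+1) : ℚ) * ((a+b)*n - b*m + ci)) * gE a b c0 ci n m := by ring
    _ = _ := by rw [this]; ring

lemma T_rec0 (a b c0 ci : ℚ) (n : ℕ) :
    ∑ m ∈ range (n+2), (Nat.choose m 0 : ℚ) * gE a b c0 ci (n+1) m
    = (b*n + c0 + ci) * ∑ m ∈ range (n+1), (Nat.choose m 0 : ℚ) * gE a b c0 ci n m := by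
  simp only [Nat.choose_zero_right, Nat.cast_one, one_mul]
  rw [Finset.sum_range_succ']
  have expand : ∀ m, gE a b c0 ci (n+1) (m+1)
      = (-a*n + b*(m+1) + c0) * gE a b c0 ci n (m+1)
        + ((a+b)*n - b*m + ci) * gE a b c0 ci n m := by
    intro m
    show (-a*↑n + b*(↑m+1) + c0) * gE a b c0 ci n (m+1)
        + ((a+b)*↑n - b*↑m + ci) * gE a b c0 ci n m = _
    push_cast
    ring
  have base : gE a b c0 ci (n+1) 0 = (-a*n + c0) * gE a b c0 ci n 0 := by
    show (-a*↑n + c0) * gE a b c0 ci n 0 = _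
    ring
  rw [Finset.sum_congr rfl (fun m _ => expand m), Finset.sum_add_distrib, base]
  have hS1 : ∑ m ∈ range (n+1), (-a*(n:ℚ) + b*(m+1) + c0) * gE a b c0 ci n (m+1)
        + (-a*(n:ℚ) + c0) * gE a b c0 ci n 0
      = ∑ m ∈ range (n+1), (-a*(n:ℚ) + b*m + c0) * gE a b c0 ci n m := by
    have h2 : ∑ m ∈ range (n+2), (-a*(n:ℚ) + b*m + c0) * gE a b c0 ci n m
        = ∑ m ∈ range (n+1), (-a*(n:ℚ) + b*(m+1) + c0) * gE a b c0 ci n (m+1)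
          + (-a*(n:ℚ) + c0) * gE a b c0 ci n 0 := by
      rw [Finset.sum_range_succ']
      push_cast
      ring_nf
    have h3 : ∑ m ∈ range (n+2), (-a*(n:ℚ) + b*m + c0) * gE a b c0 ci n m
        = ∑ m ∈ range (n+1), (-a*(n:ℚ) + b*m + c0) * gE a b c0 ci n m := by
      rw [Finset.sum_range_succ, gE_zero a b c0 ci n (n+1) (by omega)]
      ring
    rw [← h2, h3]
  have h4 : ∑ x ∈ range (n+1), ((a + b) * (n:ℚ) - b * x + ci) * gE a b c0 ci n x
      + ∑ m ∈ range (n+1), (-a*(n:ℚ) + b*m + c0) * gE a b c0 ci n m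
      = (b*n + c0 + ci) * ∑ x ∈ range (n+1), gE a b c0 ci n x := by
    rw [Finset.mul_sum, ← Finset.sum_add_distrib]
    exact Finset.sum_congr rfl fun m _ => by ring
  linear_combination hS1 + h4

lemma T_top (a b c0 ci : ℚ) (n : ℕ) :
    ∑ m ∈ range (n+1), (Nat.choose m (n+1) : ℚ) * gE a b c0 ci n m = 0 := by
  refine Finset.sum_eq_zero fun m hm => ?_
  rw [Nat.choose_eq_zero_of_lt (by simpa [Nat.lt_succ_iff] using hm)]
  simp

lemma lemA (a b c0 ci : ℚ) : ∀ n k, k ≤ n →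
    (∏ i ∈ Finset.range (n-k), (c0 + ci + (i : ℚ) * b)) * gS (-a) b ci n (n-k)
    = ∑ m ∈ range (n+1), (Nat.choose m k : ℚ) * gE a b c0 ci n m := by
  intro n
  induction n with
  | zero =>
    intro k hk
    interval_cases k
    simp [gS, gE]
  | succ n ih =>
    intro k hk
    match k with
    | 0 =>
      have h1 : n + 1 - 0 = n + 1 := rfl
      rw [h1, gS_diag, Finset.prod_range_succ, T_rec0, mul_one]
      have := ih 0 (Nat.zero_le n)
      rw [Nat.sub_zero, gS_diag, mul_one] at this
      rw [this]
      ring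
    | k+1 =>
      have hk' : k ≤ n := by omega
      have h1 : n + 1 - (k+1) = n - k := by omega
      rw [h1, T_rec a b c0 ci n k hk']
      rcases eq_or_lt_of_le hk' with rfl | hlt
      · -- k = n
        rw [Nat.sub_self, T_top, mul_zero, add_zero]
        have hS : gS (-a) b ci (k+1) 0 = (a * k + ci) * gS (-a) b ci k 0 := by
          show (-(-a) * (k:ℚ) + ci) * gS (-a) b ci k 0 = _
          ring
        have := ih k le_rfl
        rw [Nat.sub_self] at this
        simp only [Finset.range_zero, Finset.prod_empty, one_mul] at this ⊢
        rw [hS, this]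
        push_cast
        ring
      · -- k < n
        have hj : n - k = (n - (k+1)) + 1 := by omega
        set j := n - (k+1) with hjdef
        have hcast : ((j:ℚ) + 1) = ((n-k : ℕ) : ℚ) := by
          rw [hj]; push_cast; ring
        have hSrec : gS (-a) b ci (n+1) (j+1)
            = (a * n + b * ((n-k:ℕ):ℚ) + ci) * gS (-a) b ci n (j+1) + gS (-a) b ci n j := by
          show (-(-a) * (n:ℚ) + b * ((j:ℚ)+1) + ci) * gS (-a) b ci n (j+1) + gS (-a) b ci n j = _
          rw [hcast]
          ring
        rw [hj, hSrec, Finset.prod_range_succ]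
        have ih1 := ih k hk'
        have ih2 := ih (k+1) (by omega)
        rw [hj] at ih1
        rw [← hjdef] at ih2
        rw [mul_add, ← ih2]
        calc (∏ i ∈ Finset.range j, (c0 + ci + (i:ℚ) * b)) * (c0 + ci + (j:ℚ) * b) *
              ((a * n + b * ((n-k:ℕ):ℚ) + ci) * gS (-a) b ci n (j+1))
              + (∏ i ∈ Finset.range j, (c0 + ci + (i:ℚ) * b)) * (c0 + ci + (j:ℚ) * b) * gS (-a) b ci n j
            = (a * n + b * ((n-k:ℕ):ℚ) + ci) *
                ((∏ i ∈ Finset.range (j+1), (c0 + ci + (i:ℚ) * b)) * gS (-a) b ci n (j+1))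
              + (c0 + ci + (j:ℚ) * b) *
                ((∏ i ∈ Finset.range j, (c0 + ci + (i:ℚ) * b)) * gS (-a) b ci n j) := by
              rw [Finset.prod_range_succ]; ring
          _ = _ := by rw [ih1, hj]

lemma icc_to_range (f : ℕ → ℚ) (n k : ℕ) :
    ∑ m ∈ Finset.Icc k n, (Nat.choose m k : ℚ) * f m
    = ∑ m ∈ range (n+1), (Nat.choose m k : ℚ) * f m := by
  refine Finset.sum_subset (fun x hx => ?_) (fun x hx hnx => ?_)
  · simp only [Finset.mem_Icc] at hx
    simp only [Finset.mem_range]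
    omega
  · simp only [Finset.mem_range] at hx
    simp only [Finset.mem_Icc] at hnx
    rw [Nat.choose_eq_zero_of_lt (by omega)]
    simp

lemma alt_delta (n k m : ℕ) (hm : m ≤ n) :
    ∑ j ∈ Finset.Icc k n, (-1:ℚ)^(j-k) * (Nat.choose j k : ℚ) * (Nat.choose m j : ℚ)
    = if m = k then 1 else 0 := by
  rcases lt_or_ge m k with hmk | hmk
  · rw [if_neg (by omega)]
    refine Finset.sum_eq_zero fun j hj => ?_
    simp only [Finset.mem_Icc] at hj
    rw [Nat.choose_eq_zero_of_lt (show m < j by omega)]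
    ring
  · -- restrict to Icc k m
    have hsub : ∑ j ∈ Finset.Icc k n, (-1:ℚ)^(j-k) * (Nat.choose j k : ℚ) * (Nat.choose m j : ℚ)
        = ∑ j ∈ Finset.Icc k m, (-1:ℚ)^(j-k) * (Nat.choose j k : ℚ) * (Nat.choose m j : ℚ) := by
      symm
      refine Finset.sum_subset (fun x hx => ?_) (fun x hx hnx => ?_)
      · simp only [Finset.mem_Icc] at hx ⊢; omega
      · simp only [Finset.mem_Icc] at hx hnx
        rw [Nat.choose_eq_zero_of_lt (show m < x by omega)]
        ring
    rw [hsub]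
    have hIcc : Finset.Icc k m = Finset.Ico k (m+1) := by
      rw [Finset.Ico_add_one_right_eq_Icc]
    rw [hIcc, Finset.sum_Ico_eq_sum_range]
    have hlen : m + 1 - k = (m - k) + 1 := by omega
    rw [hlen]
    have hterm : ∀ i ∈ range ((m-k)+1),
        (-1:ℚ)^(k+i-k) * (Nat.choose (k+i) k : ℚ) * (Nat.choose m (k+i) : ℚ)
        = (Nat.choose m k : ℚ) * ((-1:ℚ)^i * (Nat.choose (m-k) i : ℚ)) := by
      intro i hi
      simp only [Finset.mem_range] at hi
      have h1 : k + i - k = i := by omega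
      have h2 : Nat.choose m (k+i) * Nat.choose (k+i) k
          = Nat.choose m k * Nat.choose (m-k) (k+i-k) :=
        Nat.choose_mul (by omega)
      rw [h1] at h2 ⊢
      have h2q := congrArg (Nat.cast : ℕ → ℚ) h2
      push_cast at h2q
      linear_combination (-1:ℚ)^i * h2q
    rw [Finset.sum_congr rfl hterm, ← Finset.mul_sum]
    have halt : ∑ i ∈ range ((m-k)+1), ((-1:ℚ)^i * (Nat.choose (m-k) i : ℚ))
        = if m - k = 0 then 1 else 0 := by
      have := Int.alternating_sum_range_choose (n := m-k)
      have hq := congrArg (Int.cast : ℤ → ℚ) this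
      push_cast at hq
      rw [hq]
    rw [halt]
    rcases eq_or_lt_of_le hmk with rfl | hmk'
    · simp
    · rw [if_neg (by omega), if_neg (by omega), mul_zero]

theorem gE_gS_ubt_pair (a b c0 ci : ℚ) (n k : ℕ) (hkn : k ≤ n) :
    (gE a b c0 ci n k =
      ∑ j ∈ Finset.Icc k n, (-1 : ℚ)^(j-k) * (Nat.choose j k : ℚ) *
        (∏ i ∈ Finset.range (n-j), (c0 + ci + (i : ℚ) * b)) *
        gS (-a) b ci n (n-j)) ∧
    ((∏ i ∈ Finset.range (n-k), (c0 + ci + (i : ℚ) * b)) * gS (-a) b ci n (n-k) =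
      ∑ j ∈ Finset.Icc k n, (Nat.choose j k : ℚ) * gE a b c0 ci n j) := by
  constructor
  · symm
    calc ∑ j ∈ Finset.Icc k n, (-1 : ℚ)^(j-k) * (Nat.choose j k : ℚ) *
            (∏ i ∈ Finset.range (n-j), (c0 + ci + (i : ℚ) * b)) * gS (-a) b ci n (n-j)
        = ∑ j ∈ Finset.Icc k n, ∑ m ∈ range (n+1),
            (-1 : ℚ)^(j-k) * (Nat.choose j k : ℚ) * ((Nat.choose m j : ℚ) * gE a b c0 ci n m) := by
          refine Finset.sum_congr rfl fun j hj => ?_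
          simp only [Finset.mem_Icc] at hj
          rw [mul_assoc, lemA a b c0 ci n j hj.2, Finset.mul_sum]
      _ = ∑ m ∈ range (n+1), ∑ j ∈ Finset.Icc k n,
            (-1 : ℚ)^(j-k) * (Nat.choose j k : ℚ) * ((Nat.choose m j : ℚ) * gE a b c0 ci n m) :=
          Finset.sum_comm
      _ = ∑ m ∈ range (n+1), (if m = k then 1 else 0) * gE a b c0 ci n m := by
          refine Finset.sum_congr rfl fun m hm => ?_
          simp only [Finset.mem_range] at hm
          rw [← alt_delta n k m (by omega), Finset.sum_mul]
          refine Finset.sum_congr rfl fun j hj => ?_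
          ring
      _ = gE a b c0 ci n k := by
          simp only [ite_mul, one_mul, zero_mul]
          rw [Finset.sum_ite_eq' (range (n+1)) k (gE a b c0 ci n),
            if_pos (by simp only [Finset.mem_range]; omega)]
  · rw [icc_to_range (gE a b c0 ci n) n k]
    exact lemA a b c0 ci n k hkn
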